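/- Let 𝒜 = (Q, Σ, δ) be a carefully synchronizing DFA with a word w mapping all states to a state p. Construct the NFA 𝒜' = (Q, Σ ∪ {r}, Δ') by: Δ'(q,a) = {δ(q,a)} when δ(q,a) is defined, Δ'(q,a) = Q when δ(q,a) is undefined, Δ'(p,r) = ∅, and Δ'(q,r) = Q for q ≠ p. Then wr is a mortal word for 𝒜', and every mortal word for 𝒜' contains a carefully synchronizing word for 𝒜 as a factor. -/
import Mathlib


/-- The action of an NFA with transition function `Δ` on a set of states,
extended homomorphically to words. -/
def wordImage {Q σ : Type*} (Δ : Q → σ → Set Q) : Set Q → List σ → Set Q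
  | S, [] => S
  | S, a :: w => wordImage Δ (⋃ q ∈ S, Δ q a) w

/-- Running a DFA with partial transition function `δ` on a word from state `q`;
`none` means undefined. -/
def dfaRun {Q σ : Type*} (δ : Q → σ → Option Q) : Q → List σ → Option Q
  | q, [] => some q
  | q, a :: w =>
    match δ q a with
    | none => none
    | some q' => dfaRun δ q' w

theorem dfaRun_append {Q σ : Type*} (δ : Q → σ → Option Q) (q : Q) (u v : List σ) :
    dfaRun δ q (u ++ v) = (dfaRun δ q u).bind (fun s => dfaRun δ s v) := by
  induction u generalizing q with
  | nil => simp [dfaRun]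
  | cons a u ih =>
    simp only [List.cons_append, dfaRun]
    cases δ q a with
    | none => simp
    | some q' => exact ih q'

theorem wordImage_append {Q σ : Type*} (Δ : Q → σ → Set Q) (S : Set Q) (u v : List σ) :
    wordImage Δ S (u ++ v) = wordImage Δ (wordImage Δ S u) v := by
  induction u generalizing S with
  | nil => simp [wordImage]
  | cons a u ih => simp only [List.cons_append, wordImage]; exact ih _

theorem wordImage_of_sync {Q σ : Type*} (δ : Q → σ → Option Q) (p : Q)
    (Δ' : Q → σ ⊕ Unit → Set Q)
    (hΔl : ∀ q a, Δ' q (Sum.inl a) = (δ q a).elim Set.univ (fun q' => {q'})) :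
    ∀ (u : List σ) (S : Set Q), S.Nonempty → (∀ q ∈ S, dfaRun δ q u = some p) →
      wordImage Δ' S (u.map Sum.inl) = {p} := by
  intro u
  induction u with
  | nil =>
    rintro S ⟨s, hs⟩ h
    have : S = {p} := Set.eq_singleton_iff_nonempty_unique_mem.mpr
      ⟨⟨s, hs⟩, fun q hq => by simpa [dfaRun] using h q hq⟩
    simpa [wordImage] using this
  | cons a u ih =>
    rintro S ⟨s, hs⟩ h
    simp only [List.map_cons, wordImage]
    have hmem : ∀ q ∈ S, ∃ q', δ q a = some q' ∧ dfaRun δ q' u = some p := by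
      intro q hq
      have hh := h q hq
      simp only [dfaRun] at hh
      cases hqa : δ q a with
      | none => rw [hqa] at hh; simp at hh
      | some q' => rw [hqa] at hh; exact ⟨q', rfl, hh⟩
    apply ih
    · obtain ⟨s', hs', _⟩ := hmem s hs
      exact ⟨s', Set.mem_biUnion hs (by rw [hΔl, hs']; simp)⟩
    · intro q' hq'
      obtain ⟨q, hq, hq'mem⟩ := Set.mem_iUnion₂.mp hq'
      obtain ⟨q'', hq'', hrun⟩ := hmem q hq
      rw [hΔl, hq''] at hq'mem
      simp only [Option.elim, Set.mem_singleton_iff] at hq'mem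
      subst hq'mem; exact hrun

theorem mortal_factor {Q σ : Type*} [DecidableEq Q] (δ : Q → σ → Option Q) (p : Q)
    (Δ' : Q → σ ⊕ Unit → Set Q)
    (hΔl : ∀ q a, Δ' q (Sum.inl a) = (δ q a).elim Set.univ (fun q' => {q'}))
    (hΔr : ∀ q, Δ' q (Sum.inr ()) = if q = p then (∅ : Set Q) else Set.univ) :
    ∀ (v : List (σ ⊕ Unit)) (S : Set Q) (w₀ : List σ),
      (∀ q, ∃ s ∈ S, dfaRun δ q w₀ = some s) →
      wordImage Δ' S v = ∅ →
      ∃ u₁ w' u₃, w₀.map Sum.inl ++ v = u₁ ++ w'.map Sum.inl ++ u₃ ∧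
        ∃ q₀, ∀ q, dfaRun δ q w' = some q₀ := by
  intro v
  induction v with
  | nil =>
    intro S w₀ hinv hemp
    obtain ⟨s, hs, _⟩ := hinv p
    simp only [wordImage] at hemp
    rw [hemp] at hs
    exact absurd hs (Set.notMem_empty s)
  | cons a v ih =>
    intro S w₀ hinv hemp
    simp only [wordImage] at hemp
    cases a with
    | inl x =>
      by_cases hdef : ∀ s ∈ S, (δ s x).isSome
      · have hinv' : ∀ q, ∃ s' ∈ ⋃ q' ∈ S, Δ' q' (Sum.inl x),
            dfaRun δ q (w₀ ++ [x]) = some s' := by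
          intro q
          obtain ⟨s, hs, hrun⟩ := hinv q
          obtain ⟨s', hs'⟩ := Option.isSome_iff_exists.mp (hdef s hs)
          refine ⟨s', Set.mem_biUnion hs (by rw [hΔl, hs']; simp), ?_⟩
          rw [dfaRun_append, hrun]
          simp [dfaRun, hs']
        obtain ⟨u₁, w', u₃, heq, hsync⟩ := ih _ (w₀ ++ [x]) hinv' hemp
        refine ⟨u₁, w', u₃, ?_, hsync⟩
        simpa using heq
      · push_neg at hdef
        obtain ⟨s, hs, hnone⟩ := hdef
        have hsx : δ s x = none := by
          cases h : δ s x with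
          | none => rfl
          | some q' => rw [h] at hnone; simp at hnone
        have hinv' : ∀ q, ∃ s' ∈ ⋃ q' ∈ S, Δ' q' (Sum.inl x),
            dfaRun δ q ([] : List σ) = some s' := by
          intro q
          refine ⟨q, Set.mem_biUnion hs ?_, rfl⟩
          rw [hΔl, hsx]; simp
        obtain ⟨u₁, w', u₃, heq, hsync⟩ := ih _ [] hinv' hemp
        refine ⟨w₀.map Sum.inl ++ [Sum.inl x] ++ u₁, w', u₃, ?_, hsync⟩
        simp only [List.map_nil, List.nil_append] at heq
        simp [heq]
    | inr u =>
      cases u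
      by_cases hsub : S ⊆ {p}
      · refine ⟨[], w₀, Sum.inr () :: v, by simp, p, ?_⟩
        intro q
        obtain ⟨s, hs, hrun⟩ := hinv q
        have hsp : s = p := hsub hs
        rw [← hsp]; exact hrun
      · obtain ⟨s, hs, hsp⟩ := Set.not_subset.mp hsub
        have hsp' : s ≠ p := hsp
        have hinv' : ∀ q, ∃ s' ∈ ⋃ q' ∈ S, Δ' q' (Sum.inr ()),
            dfaRun δ q ([] : List σ) = some s' := by
          intro q
          refine ⟨q, Set.mem_biUnion hs ?_, rfl⟩
          rw [hΔr]; simp [hsp']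
        obtain ⟨u₁, w', u₃, heq, hsync⟩ := ih _ [] hinv' hemp
        refine ⟨w₀.map Sum.inl ++ [Sum.inr ()] ++ u₁, w', u₃, ?_, hsync⟩
        simp only [List.map_nil, List.nil_append] at heq
        simp [heq]

/-- From a carefully synchronizing DFA (with word `w` sending all states to
`p`), the NFA `𝒜'` obtained by replacing undefined transitions by the full
state set and adding a letter `r` killing `p` has `w r` as a mortal word, and
every mortal word of `𝒜'` contains a carefully synchronizing word of the DFA
as a factor. -/
theorem stmt9 {Q σ : Type*} [DecidableEq Q] (δ : Q → σ → Option Q) (p : Q)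
    (w : List σ) (hw : ∀ q, dfaRun δ q w = some p) :
    ∀ Δ' : Q → σ ⊕ Unit → Set Q,
      (∀ q a, Δ' q (Sum.inl a) = (δ q a).elim Set.univ (fun q' => {q'})) →
      (∀ q, Δ' q (Sum.inr ()) = if q = p then (∅ : Set Q) else Set.univ) →
      wordImage Δ' Set.univ (w.map Sum.inl ++ [Sum.inr ()]) = ∅ ∧
      ∀ v : List (σ ⊕ Unit), wordImage Δ' Set.univ v = ∅ →
        ∃ (u₁ : List (σ ⊕ Unit)) (w' : List σ) (u₃ : List (σ ⊕ Unit)),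
          v = u₁ ++ w'.map Sum.inl ++ u₃ ∧
          ∃ q₀ : Q, ∀ q, dfaRun δ q w' = some q₀ := by
  intro Δ' hΔl hΔr
  constructor
  · rw [wordImage_append,
      wordImage_of_sync δ p Δ' hΔl w Set.univ ⟨p, trivial⟩ (fun q _ => hw q)]
    simp [wordImage, hΔr]
  · intro v hv
    obtain ⟨u₁, w', u₃, heq, hsync⟩ :=
      mortal_factor δ p Δ' hΔl hΔr v Set.univ [] (fun q => ⟨q, trivial, rfl⟩) hv
    exact ⟨u₁, w', u₃, by simpa using heq, hsync⟩
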